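/- For every n ≥ 1 there exist n finite-state automata B_1, ..., B_n over the three-letter alphabet {0, 1, inc}, each with O(n) states, such that the intersection of their languages is a singleton {w} where w has exactly 2^n occurrences of the letter inc. Consequently, any DFA recognizing the downward closure (or the upward closure, or the Parikh-image closure) of this intersection requires at least 2^n states. -/

import Mathlib

/-- The three-letter alphabet `{0, 1, inc}`. -/
inductive T3 where
  | b0
  | b1
  | inc
deriving DecidableEq

namespace Ctr

open List

/-! ### counting / bit arithmetic -/

lemma all_low_iff (K i : ℕ) : (∀ j < i, Nat.testBit K j = true) ↔ K % 2^i = 2^i - 1 := by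
  constructor
  · intro h
    apply Nat.eq_of_testBit_eq
    intro j
    rw [Nat.testBit_mod_two_pow, Nat.testBit_two_pow_sub_one]
    by_cases hj : j < i <;> simp [hj, h]
  · intro h j hj
    have h2 := Nat.testBit_mod_two_pow K i j
    rw [h, Nat.testBit_two_pow_sub_one] at h2
    simpa [hj] using h2.symm

lemma testBit_succ_carry (K i : ℕ) :
    Nat.testBit (K+1) i = xor (Nat.testBit K i) (decide (∀ j < i, Nat.testBit K j = true)) := by
  have h2 : 0 < 2^i := Nat.two_pow_pos i
  by_cases hc : ∀ j < i, Nat.testBit K j = true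
  · have hm : K % 2^i = 2^i - 1 := (all_low_iff K i).1 hc
    have hK := Nat.div_add_mod K (2^i)
    have hdiv : (K+1) / 2^i = K / 2^i + 1 := by
      have hEq : K + 1 = 2^i * (K / 2^i + 1) := by
        rw [Nat.mul_add, Nat.mul_one]
        omega
      rw [hEq, Nat.mul_div_cancel_left _ h2]
    rw [Nat.testBit_eq_decide_div_mod_eq, Nat.testBit_eq_decide_div_mod_eq, hdiv]
    rw [decide_eq_true hc]
    rcases Nat.mod_two_eq_zero_or_one (K / 2^i) with h | h <;>
      simp [Nat.add_mod, h]
  · have hm : K % 2^i ≠ 2^i - 1 := fun h => hc ((all_low_iff K i).2 h)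
    have hK := Nat.div_add_mod K (2^i)
    have hlt : K % 2^i + 1 < 2^i := by
      have := Nat.mod_lt K h2
      omega
    have hdiv : (K+1) / 2^i = K / 2^i := by
      have hEq : K + 1 = (K % 2^i + 1) + 2^i * (K / 2^i) := by omega
      rw [hEq, Nat.add_mul_div_left _ _ h2, Nat.div_eq_of_lt hlt, Nat.zero_add]
    rw [Nat.testBit_eq_decide_div_mod_eq, Nat.testBit_eq_decide_div_mod_eq, hdiv]
    simp [hc]

lemma mod_eq_zero_of_bits {K n : ℕ} (h : ∀ i < n, Nat.testBit K i = false) : K % 2^n = 0 := by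
  have : ∀ j, (K % 2^n).testBit j = Nat.testBit 0 j := by
    intro j
    rw [Nat.testBit_mod_two_pow, Nat.zero_testBit]
    by_cases hj : j < n
    · simp [hj, h j hj]
    · simp [hj]
  exact Nat.eq_of_testBit_eq this

lemma countP_eq_one_range {N a : ℕ} (ha : a < N) :
    List.countP (fun r => decide (r = a)) (List.range N) = 1 := by
  induction N with
  | zero => omega
  | succ N ih =>
    rw [List.range_succ, List.countP_append]
    rcases Nat.lt_or_ge a N with h | h
    · simp [ih h, Nat.ne_of_gt (h : a < N) |>.symm]
      omega
    · have haN : a = N := by omega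
      subst haN
      have : List.countP (fun r => decide (r = a)) (List.range a) = 0 := by
        rw [List.countP_eq_zero]
        intro x hx
        simp [List.mem_range] at hx
        simp
        omega
      simp [this]

lemma count_wrap (N q : ℕ) (hN : 0 < N) :
    List.countP (fun m => decide (m % N = N - 1)) (List.range (N * q)) = q := by
  induction q with
  | zero => simp
  | succ q ih =>
    have : N * (q + 1) = N * q + N := by ring
    rw [this, List.range_add, List.countP_append, ih, List.countP_map]
    have : List.countP ((fun m => decide (m % N = N - 1)) ∘ (fun x => N * q + x)) (List.range N)
        = 1 := by
      rw [show ((fun m => decide (m % N = N - 1)) ∘ (fun x => N * q + x))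
          = fun r => decide ((N * q + r) % N = N - 1) from rfl]
      have hcg : ∀ r ∈ List.range N,
          (decide ((N * q + r) % N = N - 1) = true ↔ decide (r = N - 1) = true) := by
        intro r hr
        rw [List.mem_range] at hr
        have : (N * q + r) % N = r := by
          rw [Nat.add_comm, Nat.add_mul_mod_self_left]
          exact Nat.mod_eq_of_lt hr
        simp [this]
      rw [List.countP_congr hcg]
      exact countP_eq_one_range (by omega)
    omega


/-! ### the automata -/

abbrev St (n : ℕ) := Option (Fin (n+1) × Bool × Bool × Bool × Fin 3)

def cap2 (m : ℕ) : Fin 3 := ⟨min m 2, by omega⟩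

lemma cap2_add (a b : ℕ) : cap2 ((cap2 a).val + b) = cap2 (a + b) := by
  simp only [cap2]
  congr 1
  omega

lemma cap2_fin (a : Fin 3) : cap2 a.val = a := by
  have := a.isLt
  simp only [cap2]
  ext
  simp
  omega

def letter (x : Bool) : T3 := cond x T3.b1 T3.b0

def lw (t : List Bool) : List T3 := t.map letter

lemma inc_not_mem_lw (t : List Bool) : T3.inc ∉ lw t := by
  intro h
  rcases List.mem_map.1 h with ⟨x, _, hx⟩
  cases x <;> simp [letter] at hx

lemma count_inc_lw (t : List Bool) : (lw t).count T3.inc = 0 :=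
  List.count_eq_zero.2 (inc_not_mem_lw t)

def stepBit (n i : ℕ) (p : Fin (n+1)) (low bit all1 : Bool) (wr : Fin 3) (x : Bool) : St n :=
  if h : p.val < n then
    if p.val = i ∧ x ≠ bit then none
    else some (⟨p.val + 1, by omega⟩, low && (if p.val < i then x else true),
      (if p.val = i then x else bit), all1 && x, wr)
  else none

def step (n i : ℕ) : St n → T3 → St n
  | none, _ => none
  | some (p, low, bit, all1, wr), T3.inc =>
      if p.val = n then
        some (⟨0, Nat.succ_pos n⟩, true, xor bit low, true,
          cap2 (wr.val + (if all1 then 1 else 0)))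
      else none
  | some (p, low, bit, all1, wr), T3.b0 => stepBit n i p low bit all1 wr false
  | some (p, low, bit, all1, wr), T3.b1 => stepBit n i p low bit all1 wr true

def start (n : ℕ) : St n := some (⟨0, Nat.succ_pos n⟩, true, false, true, 0)

def acc (n : ℕ) : Set (St n) :=
  {s | ∃ low all1 : Bool, s = some (⟨n, Nat.lt_succ_self n⟩, low, false, all1, ⟨1, by omega⟩)}

def A (n i : ℕ) : DFA T3 (St n) := ⟨step n i, start n, acc n⟩

lemma step_letter (n i : ℕ) (p : Fin (n+1)) (low bit all1 : Bool) (wr : Fin 3) (x : Bool) :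
    step n i (some (p, low, bit, all1, wr)) (letter x) = stepBit n i p low bit all1 wr x := by
  cases x <;> rfl

lemma step_none (n i : ℕ) (a : T3) : step n i none a = none := rfl

/-! ### expected-bit bookkeeping -/

def eup (i : ℕ) (e : Bool) (b : List Bool) : Bool := xor e ((b.take i).all id)

def Eacc (i : ℕ) (e : Bool) (bs : List (List Bool)) : Bool := bs.foldl (eup i) e

@[simp] lemma Eacc_nil (i : ℕ) (e : Bool) : Eacc i e [] = e := rfl

@[simp] lemma Eacc_cons (i : ℕ) (e : Bool) (b : List Bool) (bs : List (List Bool)) :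
    Eacc i e (b :: bs) = Eacc i (eup i e b) bs := rfl

lemma Eacc_append_singleton (i : ℕ) (e : Bool) (bs : List (List Bool)) (b : List Bool) :
    Eacc i e (bs ++ [b]) = eup i (Eacc i e bs) b := by
  simp [Eacc, List.foldl_append]

def wcnt (bs : List (List Bool)) : ℕ := bs.countP (fun b => b.all id)

@[simp] lemma wcnt_nil : wcnt [] = 0 := rfl

lemma wcnt_append_singleton (bs : List (List Bool)) (b : List Bool) :
    wcnt (bs ++ [b]) = wcnt bs + (if b.all id then 1 else 0) := by
  simp [wcnt, List.countP_append, List.countP_cons]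

def encode : List (List Bool) → List Bool → List T3
  | [], t => lw t
  | b :: bs, t => lw b ++ T3.inc :: encode bs t

lemma encode_nil (t : List Bool) : encode [] t = lw t := rfl

lemma count_inc_encode (bs : List (List Bool)) (t : List Bool) :
    (encode bs t).count T3.inc = bs.length := by
  induction bs with
  | nil => simp [encode, count_inc_lw]
  | cons b bs ih => simp [encode, List.count_append, count_inc_lw, ih]

lemma encode_snoc (bs : List (List Bool)) (b t : List Bool) :
    encode (bs ++ [b]) t = encode bs b ++ T3.inc :: lw t := by
  induction bs with
  | nil => simp [encode]
  | cons c bs ih => simp [encode, ih]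

lemma encode_addbit (bs : List (List Bool)) (t : List Bool) (x : Bool) :
    encode bs (t ++ [x]) = encode bs t ++ [letter x] := by
  induction bs with
  | nil => simp [encode, lw]
  | cons c bs ih => simp [encode, ih]

lemma encode_split (bs : List (List Bool)) (t : List Bool) (m : ℕ) :
    encode bs t = encode (bs.take m) [] ++ encode (bs.drop m) t := by
  induction bs generalizing m with
  | nil => simp [encode, lw]
  | cons b bs ih =>
    cases m with
    | zero => simp [encode, lw]
    | succ m => simp [encode, ih m]
/-! ### running the automaton over blocks -/

def blockStart (n : ℕ) (e : Bool) (wr : Fin 3) : St n :=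
  some (⟨0, Nat.succ_pos n⟩, true, e, true, wr)

def mid (n i : ℕ) (t : List Bool) (ht : t.length ≤ n) (e : Bool) (wr : Fin 3) : St n :=
  some (⟨t.length, Nat.lt_succ_of_le ht⟩, (t.take i).all id, e, t.all id, wr)

lemma take_all_snoc (t : List Bool) (x : Bool) (i : ℕ) :
    ((t ++ [x]).take i).all id
      = (((t.take i).all id) && (if t.length < i then x else true)) := by
  rcases Nat.lt_or_ge t.length i with h | h
  · have h1 : (t ++ [x]).take i = t ++ [x] := by
      apply List.take_of_length_le
      simp
      omega
    have h2 : t.take i = t := List.take_of_length_le (by omega)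
    simp [h1, h2, h, List.all_append, Bool.and_comm]
  · have h1 : (t ++ [x]).take i = t.take i := by
      rw [List.take_append_of_le_length h]
    simp only [h1]
    have : ¬ t.length < i := by omega
    simp [this]

lemma blockRun (n i : ℕ) (t : List Bool) (ht : t.length ≤ n) (e : Bool) (wr : Fin 3)
    (hti : ∀ h : i < t.length, t[i] = e) :
    (A n i).evalFrom (blockStart n e wr) (lw t) = mid n i t ht e wr := by
  induction t using List.reverseRecOn with
  | nil =>
    simp [lw, DFA.evalFrom, blockStart, mid]
  | append_singleton t x ih =>
    have ht' : t.length ≤ n := by simp at ht; omega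
    have hlt : t.length < n := by simp at ht; omega
    have hti' : ∀ h : i < t.length, t[i] = e := by
      intro h
      have := hti (by simp; omega)
      rwa [List.getElem_append_left h] at this
    have hlw : lw (t ++ [x]) = lw t ++ [letter x] := by simp [lw]
    rw [hlw, DFA.evalFrom_append_singleton, ih ht' hti']
    show step n i _ _ = _
    rw [mid, step_letter]
    have hx : t.length = i → x = e := by
      intro hh
      subst hh
      have h2 := hti (by simp)
      rwa [List.getElem_concat_length (l := t) (a := x) rfl] at h2
    have hbit : (if t.length = i then x else e) = e := by
      by_cases hh : t.length = i
      · simp [hh, hx hh]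
      · simp [hh]
    simp only [stepBit]
    rw [dif_pos hlt, if_neg (by simp only [ne_eq, not_and, not_not]; exact hx)]
    simp [mid, hbit, take_all_snoc, List.all_append]
def Good (i : ℕ) : Bool → List (List Bool) → Prop
  | _, [] => True
  | e, b :: bs => (∀ h : i < b.length, b[i] = e) ∧ Good i (eup i e b) bs

lemma step_inc (n i : ℕ) (p : Fin (n+1)) (low bit all1 : Bool) (wr : Fin 3) :
    step n i (some (p, low, bit, all1, wr)) T3.inc
      = if p.val = n then
          some (⟨0, Nat.succ_pos n⟩, true, xor bit low, true,
            cap2 (wr.val + (if all1 then 1 else 0)))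
        else none := rfl

lemma A_step (n i : ℕ) : (A n i).step = step n i := rfl

lemma wcnt_cons (b : List Bool) (bs : List (List Bool)) :
    wcnt (b :: bs) = wcnt bs + (if b.all id then 1 else 0) := by
  simp [wcnt, List.countP_cons]

lemma encodeRun (n i : ℕ) (bs : List (List Bool)) (e : Bool) (wr : Fin 3)
    (t : List Bool) (hb : ∀ b ∈ bs, b.length = n) (ht : t.length ≤ n)
    (hg : Good i e bs) (hti : ∀ h : i < t.length, t[i] = Eacc i e bs) :
    (A n i).evalFrom (blockStart n e wr) (encode bs t)
      = mid n i t ht (Eacc i e bs) (cap2 (wr.val + wcnt bs)) := by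
  induction bs generalizing e wr with
  | nil =>
    have hc : cap2 (wr.val + wcnt []) = wr := by
      rw [wcnt_nil, Nat.add_zero, cap2_fin]
    rw [encode_nil, hc, blockRun n i t ht e wr hti]
    simp [Eacc]
  | cons b bs ih =>
    obtain ⟨hgb, hg'⟩ := hg
    have hbn : b.length = n := hb b (by simp)
    show (A n i).evalFrom _ (lw b ++ T3.inc :: encode bs t) = _
    rw [show lw b ++ T3.inc :: encode bs t = (lw b ++ [T3.inc]) ++ encode bs t by simp,
      DFA.evalFrom_of_append, DFA.evalFrom_of_append,
      blockRun n i b (le_of_eq hbn) e wr hgb]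
    have hstep : (A n i).evalFrom (mid n i b (le_of_eq hbn) e wr) [T3.inc]
        = blockStart n (eup i e b) (cap2 (wr.val + (if b.all id then 1 else 0))) := by
      rw [DFA.evalFrom_singleton, A_step, mid, step_inc]
      simp [hbn, blockStart, eup]
    rw [hstep, ih (eup i e b) (cap2 (wr.val + (if b.all id then 1 else 0)))
      (fun c hc => hb c (by simp [hc])) hg' hti]
    rw [mid, mid, cap2_add, wcnt_cons]
    have : wr.val + (if b.all id = true then 1 else 0) + wcnt bs
        = wr.val + (wcnt bs + if b.all id = true then 1 else 0) := by omega
    rw [this]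
    rfl
/-! ### the binary counter word -/

def bitsL (n m : ℕ) : List Bool := (List.range n).map (fun j => Nat.testBit m j)

@[simp] lemma bitsL_length (n m : ℕ) : (bitsL n m).length = n := by simp [bitsL]

lemma bitsL_getElem (n m j : ℕ) (h : j < n) (h' : j < (bitsL n m).length) :
    (bitsL n m)[j] = Nat.testBit m j := by
  simp [bitsL]

lemma all_take_bitsL (n m i : ℕ) (hi : i ≤ n) :
    ((bitsL n m).take i).all id = decide (∀ j < i, Nat.testBit m j = true) := by
  have h1 : (bitsL n m).take i = (List.range i).map (fun j => Nat.testBit m j) := by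
    rw [bitsL, ← List.map_take, List.take_range, Nat.min_eq_left hi]
  rw [h1]
  by_cases h : ∀ j < i, Nat.testBit m j = true
  · rw [decide_eq_true h, List.all_eq_true]
    intro b hb
    obtain ⟨j, hj, rfl⟩ := List.mem_map.1 hb
    exact h j (List.mem_range.1 hj)
  · rw [decide_eq_false h, ← Bool.not_eq_true, List.all_eq_true]
    intro hall
    apply h
    intro j hj
    exact hall _ (List.mem_map.2 ⟨j, List.mem_range.2 hj, rfl⟩)

lemma all_bitsL (n m : ℕ) :
    (bitsL n m).all id = decide (∀ j < n, Nat.testBit m j = true) := by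
  have := all_take_bitsL n m n le_rfl
  rwa [List.take_of_length_le (by simp)] at this

lemma eup_bitsL (n m i : ℕ) (hi : i ≤ n) (e : Bool) :
    eup i e (bitsL n m) = xor e (decide (∀ j < i, Nat.testBit m j = true)) := by
  rw [eup, all_take_bitsL n m i hi]

lemma GoodBS (n i : ℕ) (hi : i ≤ n) :
    ∀ (M K : ℕ), Good i (Nat.testBit K i) ((List.range' K M).map (bitsL n)) := by
  intro M
  induction M with
  | zero => intro K; simp [Good]
  | succ M ih =>
    intro K
    rw [List.range'_succ, List.map_cons]
    refine ⟨?_, ?_⟩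
    · intro h
      exact bitsL_getElem n K i (by simpa using h) _
    · rw [eup_bitsL n K i hi, ← testBit_succ_carry]
      exact ih (K + 1)

lemma EaccBS (n i : ℕ) (hi : i ≤ n) :
    ∀ (M K : ℕ), Eacc i (Nat.testBit K i) ((List.range' K M).map (bitsL n))
      = Nat.testBit (K + M) i := by
  intro M
  induction M with
  | zero => intro K; simp
  | succ M ih =>
    intro K
    rw [List.range'_succ, List.map_cons, Eacc_cons, eup_bitsL n K i hi,
      ← testBit_succ_carry, ih (K + 1)]
    congr 1
    omega

def BS (n : ℕ) : List (List Bool) := (List.range (2^n)).map (bitsL n)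

def wWord (n : ℕ) : List T3 := encode (BS n) (List.replicate n false)

lemma BS_eq_range' (n : ℕ) : BS n = (List.range' 0 (2^n)).map (bitsL n) := by
  rw [BS, List.range_eq_range']

lemma Eacc_BS (n i : ℕ) (hi : i < n) : Eacc i false (BS n) = false := by
  rw [BS_eq_range']
  have h0 : Nat.testBit 0 i = false := Nat.zero_testBit i
  rw [← h0, EaccBS n i (le_of_lt hi), Nat.zero_add, Nat.testBit_two_pow]
  simp
  omega

lemma wcnt_BS (n : ℕ) : wcnt (BS n) = 1 := by
  rw [wcnt, BS, List.countP_map]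
  have hcg : ∀ m ∈ List.range (2^n),
      (((fun b => b.all id) ∘ bitsL n) m = true ↔ (fun r => decide (r = 2^n - 1)) m = true) := by
    intro m hm
    rw [List.mem_range] at hm
    simp only [Function.comp_apply, all_bitsL, decide_eq_true_eq]
    rw [all_low_iff]
    rw [Nat.mod_eq_of_lt hm]
  rw [List.countP_congr hcg]
  exact countP_eq_one_range (by have h2 : (0:ℕ) < 2^n := Nat.two_pow_pos n; omega)

lemma count_inc_wWord (n : ℕ) : (wWord n).count T3.inc = 2^n := by
  rw [wWord, count_inc_encode, BS]
  simp

lemma w_accepted (n i : ℕ) (hi : i < n) : wWord n ∈ (A n i).accepts := by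
  rw [DFA.mem_accepts]
  have hstart : (A n i).eval (wWord n) = (A n i).evalFrom (blockStart n false 0) (wWord n) := rfl
  rw [hstart, wWord,
    encodeRun n i (BS n) false 0 (List.replicate n false)
      (by intro b hb; rw [BS] at hb; obtain ⟨m, _, rfl⟩ := List.mem_map.1 hb; simp)
      (by simp)
      (by rw [BS_eq_range']; have := GoodBS n i (le_of_lt hi) (2^n) 0; simpa using this)
      (by intro h; rw [List.getElem_replicate, Eacc_BS n i hi])]
  refine ⟨((List.replicate n false).take i).all id, (List.replicate n false).all id, ?_⟩
  rw [mid, Eacc_BS n i hi]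
  have hw : cap2 ((0 : Fin 3).val + wcnt (BS n)) = ⟨1, by omega⟩ := by
    rw [wcnt_BS]
    rfl
  rw [hw]
  simp
/-! ### backward direction: any live word decomposes into counter blocks -/

def midSt (n i : ℕ) (bs : List (List Bool)) (t : List Bool) (ht : t.length ≤ n) : St n :=
  mid n i t ht (Eacc i false bs) (cap2 (wcnt bs))

def DecompProp (n : ℕ) (v : List T3) : Prop :=
  ∃ bs t, v = encode bs t ∧ (∀ b ∈ bs, b.length = n) ∧ ∃ ht : t.length ≤ n,
    (∀ i < n, (A n i).eval v = midSt n i bs t ht) ∧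
    (∀ m, m < bs.length → ∀ i < n,
      (bs.getD m []).getD i false = Eacc i false (bs.take m)) ∧
    (∀ i < n, i < t.length → t.getD i false = Eacc i false bs)

lemma decomp_bit (n : ℕ) (hn : 0 < n) (bs : List (List Bool)) (t : List Bool)
    (hb : ∀ b ∈ bs, b.length = n) (ht : t.length ≤ n)
    (hmid : ∀ i < n, (A n i).eval (encode bs t) = midSt n i bs t ht)
    (hC1 : ∀ m, m < bs.length → ∀ i < n,
      (bs.getD m []).getD i false = Eacc i false (bs.take m))
    (hC2 : ∀ i < n, i < t.length → t.getD i false = Eacc i false bs)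
    (x : Bool)
    (hlive : ∀ i < n, (A n i).eval (encode bs t ++ [letter x]) ≠ none) :
    DecompProp n (encode bs t ++ [letter x]) := by
  have hev : ∀ i < n, (A n i).eval (encode bs t ++ [letter x])
      = stepBit n i ⟨t.length, Nat.lt_succ_of_le ht⟩ ((t.take i).all id)
          (Eacc i false bs) (t.all id) (cap2 (wcnt bs)) x := by
    intro i hi
    rw [DFA.eval_append_singleton, hmid i hi, A_step, midSt, mid, step_letter]
  have hlen : t.length < n := by
    rcases Nat.lt_or_ge t.length n with h | h
    · exact h
    · exfalso
      apply hlive 0 hn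
      rw [hev 0 hn, stepBit, dif_neg (by simp; omega)]
  have hchk : ∀ i < n, t.length = i → x = Eacc i false bs := by
    intro i hi hti
    by_contra hne
    apply hlive i hi
    rw [hev i hi, stepBit, dif_pos hlen, if_pos ⟨hti, hne⟩]
  refine ⟨bs, t ++ [x], (encode_addbit bs t x).symm, hb, by simp; omega, ?_, ?_, ?_⟩
  · intro i hi
    rw [hev i hi, stepBit, dif_pos hlen]
    rw [if_neg (by
      simp only [ne_eq, not_and, not_not]
      intro h1
      exact (hchk i hi h1).symm ▸ rfl)]
    rw [midSt, mid]
    have hbit : (if t.length = i then x else Eacc i false bs) = Eacc i false bs := by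
      by_cases hh : t.length = i
      · simp [hh, hchk i hi hh]
      · simp [hh]
    simp [hbit, take_all_snoc, List.all_append]
  · exact hC1
  · intro i hi hit
    rcases Nat.lt_or_ge i t.length with h | h
    · rw [List.getD_eq_getElem _ _ (by simp; omega), List.getElem_append_left h,
        ← List.getD_eq_getElem _ _ h]
      exact hC2 i hi h
    · have hieq : i = t.length := by simp at hit; omega
      rw [List.getD_eq_getElem _ _ (by simp; omega),
        List.getElem_concat_length (l := t) (a := x) hieq]
      exact hchk i hi hieq.symm

lemma decomp_inc (n : ℕ) (hn : 0 < n) (bs : List (List Bool)) (t : List Bool)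
    (hb : ∀ b ∈ bs, b.length = n) (ht : t.length ≤ n)
    (hmid : ∀ i < n, (A n i).eval (encode bs t) = midSt n i bs t ht)
    (hC1 : ∀ m, m < bs.length → ∀ i < n,
      (bs.getD m []).getD i false = Eacc i false (bs.take m))
    (hC2 : ∀ i < n, i < t.length → t.getD i false = Eacc i false bs)
    (hlive : ∀ i < n, (A n i).eval (encode bs t ++ [T3.inc]) ≠ none) :
    DecompProp n (encode bs t ++ [T3.inc]) := by
  have hev : ∀ i < n, (A n i).eval (encode bs t ++ [T3.inc])
      = if t.length = n then
          some (⟨0, Nat.succ_pos n⟩, true,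
            xor (Eacc i false bs) ((t.take i).all id), true,
            cap2 ((cap2 (wcnt bs)).val + (if t.all id then 1 else 0)))
        else none := by
    intro i hi
    rw [DFA.eval_append_singleton, hmid i hi, A_step, midSt, mid, step_inc]
  have hlen : t.length = n := by
    by_contra hne
    apply hlive 0 hn
    rw [hev 0 hn, if_neg hne]
  have henc : encode bs t ++ [T3.inc] = encode (bs ++ [t]) [] := by
    rw [encode_snoc]
    simp [lw]
  refine ⟨bs ++ [t], [], henc, ?_, by simp, ?_, ?_, ?_⟩
  · intro b hbb
    rcases List.mem_append.1 hbb with h | h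
    · exact hb b h
    · simp at h
      subst h
      exact hlen
  · intro i hi
    rw [hev i hi, if_pos hlen, midSt, mid,
      Eacc_append_singleton, eup, wcnt_append_singleton, cap2_add]
    simp
  · intro m hm i hi
    rcases Nat.lt_or_ge m bs.length with h | h
    · have h1 : m < (bs ++ [t]).length := by simp; omega
      rw [List.getD_eq_getElem (bs ++ [t]) ([] : List Bool) h1]
      rw [List.getElem_append_left h]
      rw [← List.getD_eq_getElem bs ([] : List Bool) h]
      rw [List.take_append_of_le_length (le_of_lt h)]
      exact hC1 m h i hi
    · have hmeq : m = bs.length := by simp at hm; omega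
      subst hmeq
      have h1 : bs.length < (bs ++ [t]).length := by simp
      rw [List.getD_eq_getElem (bs ++ [t]) ([] : List Bool) h1]
      rw [List.getElem_concat_length (l := bs) (a := t) rfl]
      rw [List.take_append_of_le_length le_rfl, List.take_length]
      exact hC2 i hi (by omega)
  · intro i hi hit
    simp at hit
lemma live_decomp (n : ℕ) (hn : 0 < n) :
    ∀ v : List T3, (∀ i < n, (A n i).eval v ≠ none) → DecompProp n v := by
  intro v
  induction v using List.reverseRecOn with
  | nil =>
    intro _
    refine ⟨[], [], rfl, by simp, by simp, ?_, by simp, by simp⟩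
    intro i hi
    show start n = _
    rw [midSt, mid, start]
    simp [Eacc, wcnt, cap2, Fin.ext_iff]
  | append_singleton v a ih =>
    intro hlive
    have hv : ∀ i < n, (A n i).eval v ≠ none := by
      intro i hi h
      apply hlive i hi
      rw [DFA.eval_append_singleton, A_step, h, step_none]
    obtain ⟨bs, t, rfl, hb, ht, hmid, hC1, hC2⟩ := ih hv
    cases a with
    | b0 => exact decomp_bit n hn bs t hb ht hmid hC1 hC2 false hlive
    | b1 => exact decomp_bit n hn bs t hb ht hmid hC1 hC2 true hlive
    | inc => exact decomp_inc n hn bs t hb ht hmid hC1 hC2 hlive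

/-! ### uniqueness : an accepted word is the counter word -/

lemma accepted_eq (n : ℕ) (hn : 0 < n) (v : List T3)
    (hacc : ∀ i < n, v ∈ (A n i).accepts) : v = wWord n := by
  have hlive : ∀ i < n, (A n i).eval v ≠ none := by
    intro i hi h
    obtain ⟨low, all1, heq⟩ := (DFA.mem_accepts _).1 (hacc i hi)
    rw [h] at heq
    cases heq
  obtain ⟨bs, t, rfl, hb, ht, hmid, hC1, hC2⟩ := live_decomp n hn _ hlive
  have hstate : ∀ i < n, t.length = n ∧ Eacc i false bs = false ∧ wcnt bs = 1 := by
    intro i hi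
    obtain ⟨low, all1, heq⟩ := (DFA.mem_accepts _).1 (hacc i hi)
    rw [hmid i hi, midSt, mid] at heq
    simp only [cap2, Option.some.injEq, Prod.mk.injEq, Fin.mk.injEq] at heq
    obtain ⟨h1, _, h3, _, h5⟩ := heq
    exact ⟨h1, h3, by omega⟩
  have htn : t.length = n := (hstate 0 hn).1
  have hwc : wcnt bs = 1 := (hstate 0 hn).2.2
  -- identify the complete blocks
  have hblocks : ∀ m, m ≤ bs.length → bs.take m = (List.range m).map (bitsL n) := by
    intro m
    induction m with
    | zero => simp
    | succ m ihm =>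
      intro hm
      have hm' : m < bs.length := by omega
      have htake := ihm (by omega)
      have hsplit : bs.take (m+1) = bs.take m ++ [bs[m]'hm'] := by
        rw [← List.take_concat_get hm', List.concat_eq_append]
      have hblk : bs[m]'hm' = bitsL n m := by
        apply List.ext_getElem
        · rw [hb _ (List.getElem_mem _), bitsL_length]
        · intro j h1 h2
          have hjn : j < n := by rwa [hb _ (List.getElem_mem _)] at h1
          have hcc := hC1 m hm' j hjn
          rw [List.getD_eq_getElem bs [] hm'] at hcc
          rw [List.getD_eq_getElem _ false h1] at hcc
          rw [hcc, htake, bitsL_getElem n m j hjn]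
          rw [show (List.range m).map (bitsL n) = (List.range' 0 m).map (bitsL n) by
            rw [List.range_eq_range']]
          rw [show (false : Bool) = Nat.testBit 0 j from (Nat.zero_testBit j).symm]
          rw [EaccBS n j (le_of_lt hjn)]
          simp
      rw [hsplit, htake, hblk, List.range_succ, List.map_append, List.map_singleton]
  have hbs : bs = (List.range bs.length).map (bitsL n) := by
    have := hblocks bs.length le_rfl
    rwa [List.take_length] at this
  -- the number of blocks is 2^n
  have hEK : ∀ i < n, Nat.testBit bs.length i = false := by
    intro i hi
    have hE := (hstate i hi).2.1
    rw [hbs] at hE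
    rw [show (List.range bs.length).map (bitsL n) = (List.range' 0 bs.length).map (bitsL n) by
      rw [List.range_eq_range']] at hE
    rw [show (false : Bool) = Nat.testBit 0 i from (Nat.zero_testBit i).symm] at hE
    rw [EaccBS n i (le_of_lt hi)] at hE
    simpa using hE
  have hmod : bs.length % 2^n = 0 := mod_eq_zero_of_bits hEK
  have hKq : bs.length = 2^n * (bs.length / 2^n) := by
    have := Nat.div_add_mod bs.length (2^n)
    omega
  have hcg : ∀ m ∈ List.range bs.length,
      (((fun b => b.all id) ∘ bitsL n) m = true
        ↔ (fun m => decide (m % 2^n = 2^n - 1)) m = true) := by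
    intro m _
    simp only [Function.comp_apply, all_bitsL, decide_eq_true_eq]
    exact all_low_iff m n
  have hwq : wcnt bs = bs.length / 2^n := by
    have h2 : wcnt bs
        = List.countP (fun m => decide (m % 2^n = 2^n - 1)) (List.range bs.length) := by
      conv_lhs => rw [wcnt, hbs]
      rw [List.countP_map, List.countP_congr hcg]
    rw [h2]
    conv_lhs => rw [hKq]
    exact count_wrap (2^n) (bs.length / 2^n) (Nat.two_pow_pos n)
  have hq1 : bs.length / 2^n = 1 := by omega
  have hlen2 : bs.length = 2^n := by
    rw [hq1, Nat.mul_one] at hKq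
    exact hKq
  have hbsBS : bs = BS n := by
    rw [hbs, hlen2, BS]
  have htrep : t = List.replicate n false := by
    apply List.ext_getElem
    · simp [htn]
    · intro j h1 h2
      rw [List.getElem_replicate]
      have hjn : j < n := by omega
      have := hC2 j hjn (by omega)
      rw [List.getD_eq_getElem t false h1] at this
      rw [this, (hstate j hjn).2.1]
  rw [hbsBS, htrep, wWord]
/-! ### transporting a DFA along an embedding of its state space -/

def embedDFA {α S Q : Type} (D : DFA α S) (e : S → Q) (r : Q → S) : DFA α Q :=
  ⟨fun q a => e (D.step (r q) a), e D.start, e '' D.accept⟩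

lemma embedDFA_evalFrom {α S Q : Type} (D : DFA α S) (e : S → Q) (r : Q → S)
    (hr : ∀ s, r (e s) = s) : ∀ (x : List α) (s : S),
    (embedDFA D e r).evalFrom (e s) x = e (D.evalFrom s x) := by
  intro x
  induction x with
  | nil => intro s; rfl
  | cons a x ih =>
    intro s
    show (embedDFA D e r).evalFrom ((embedDFA D e r).step (e s) a) x
      = e (D.evalFrom (D.step s a) x)
    have hst : (embedDFA D e r).step (e s) a = e (D.step s a) := by
      show e (D.step (r (e s)) a) = _
      rw [hr]
    rw [hst, ih]

lemma embedDFA_accepts {α S Q : Type} (D : DFA α S) (e : S → Q) (r : Q → S)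
    (he : Function.Injective e) (hr : ∀ s, r (e s) = s) :
    (embedDFA D e r).accepts = D.accepts := by
  ext x
  rw [DFA.mem_accepts, DFA.mem_accepts]
  show (embedDFA D e r).evalFrom (e D.start) x ∈ e '' D.accept ↔ _
  rw [embedDFA_evalFrom D e r hr]
  exact he.mem_set_image

lemma eval_append {α Q : Type} (D : DFA α Q) (x y : List α) :
    D.eval (x ++ y) = D.evalFrom (D.eval x) y :=
  DFA.evalFrom_of_append D D.start x y

/-! ### lower bounds for the closures -/

lemma lb_down {Q : Type} [Fintype Q] (w : List T3) (N : ℕ) (hN : w.count T3.inc = N)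
    (D : DFA T3 Q) (hD : ∀ v, v ∈ D.accepts ↔ v.Sublist w) : N ≤ Fintype.card Q := by
  have key : ∀ i j : Fin N, i.val < j.val →
      D.eval (List.replicate i.val T3.inc) ≠ D.eval (List.replicate j.val T3.inc) := by
    intro i j hij heq
    have hi := i.isLt
    have hj := j.isLt
    have h1 : List.replicate i.val T3.inc ++ List.replicate (N - i.val) T3.inc
        = List.replicate N T3.inc := by
      rw [← List.replicate_add]
      congr 1
      omega
    have hacc1 : List.replicate N T3.inc ∈ D.accepts :=
      (hD _).2 (List.replicate_sublist_iff.2 (le_of_eq hN.symm))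
    have heval : D.eval (List.replicate j.val T3.inc ++ List.replicate (N - i.val) T3.inc)
        = D.eval (List.replicate N T3.inc) := by
      rw [← h1, eval_append, eval_append, heq]
    have hacc2 : List.replicate j.val T3.inc ++ List.replicate (N - i.val) T3.inc
        ∈ D.accepts := by
      rw [DFA.mem_accepts, heval, ← DFA.mem_accepts]
      exact hacc1
    have hsub := (hD _).1 hacc2
    have hcnt := hsub.count_le T3.inc
    rw [hN, List.count_append, List.count_replicate_self, List.count_replicate_self] at hcnt
    omega
  have hinj : Function.Injective (fun i : Fin N => D.eval (List.replicate i.val T3.inc)) := by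
    intro i j h
    rcases lt_trichotomy i.val j.val with hh | hh | hh
    · exact absurd h (key i j hh)
    · exact Fin.ext hh
    · exact absurd h.symm (key j i hh)
  calc N = Fintype.card (Fin N) := (Fintype.card_fin N).symm
    _ ≤ Fintype.card Q := Fintype.card_le_of_injective _ hinj

lemma lb_up {Q : Type} [Fintype Q] (n : ℕ) (D : DFA T3 Q)
    (hD : ∀ v, v ∈ D.accepts ↔ (wWord n).Sublist v) : 2^n ≤ Fintype.card Q := by
  set P : Fin (2^n) → List T3 := fun i => encode ((BS n).take i.val) [] with hP
  have hBSlen : (BS n).length = 2^n := by simp [BS]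
  have hsplit : ∀ i : Fin (2^n),
      wWord n = P i ++ encode ((BS n).drop i.val) (List.replicate n false) := by
    intro i
    rw [hP, wWord]
    exact encode_split (BS n) (List.replicate n false) i.val
  have key : ∀ i j : Fin (2^n), i.val < j.val → D.eval (P i) ≠ D.eval (P j) := by
    intro i j hij heq
    have hi := i.isLt
    have hj := j.isLt
    set u := encode ((BS n).drop j.val) (List.replicate n false) with hu
    have hacc1 : wWord n ∈ D.accepts := (hD _).2 (List.Sublist.refl _)
    have heval : D.eval (P i ++ u) = D.eval (wWord n) := by
      conv_rhs => rw [hsplit j]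
      rw [eval_append, eval_append, heq]
    have hacc2 : P i ++ u ∈ D.accepts := by
      rw [DFA.mem_accepts, heval, ← DFA.mem_accepts]
      exact hacc1
    have hsub := (hD _).1 hacc2
    have hcnt := hsub.count_le T3.inc
    rw [count_inc_wWord, List.count_append] at hcnt
    have hcp : (P i).count T3.inc = i.val := by
      rw [hP, count_inc_encode, List.length_take, hBSlen]
      omega
    have hcu : u.count T3.inc = 2^n - j.val := by
      rw [hu, count_inc_encode, List.length_drop, hBSlen]
    rw [hcp, hcu] at hcnt
    omega
  have hinj : Function.Injective (fun i : Fin (2^n) => D.eval (P i)) := by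
    intro i j h
    rcases lt_trichotomy i.val j.val with hh | hh | hh
    · exact absurd h (key i j hh)
    · exact Fin.ext hh
    · exact absurd h.symm (key j i hh)
  calc 2^n = Fintype.card (Fin (2^n)) := (Fintype.card_fin _).symm
    _ ≤ Fintype.card Q := Fintype.card_le_of_injective _ hinj

lemma lb_parikh {Q : Type} [Fintype Q] (n : ℕ) (D : DFA T3 Q)
    (hD : ∀ v, v ∈ D.accepts ↔ ∀ a, v.count a = (wWord n).count a) :
    2^n ≤ Fintype.card Q := by
  have key : ∀ i j : Fin (2^n), i.val ≠ j.val →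
      D.eval (List.replicate i.val T3.inc) ≠ D.eval (List.replicate j.val T3.inc) := by
    intro i j hij heq
    have hi := i.isLt
    have hj := j.isLt
    set u := List.replicate (2^n - i.val) T3.inc
      ++ List.replicate ((wWord n).count T3.b0) T3.b0
      ++ List.replicate ((wWord n).count T3.b1) T3.b1 with hu
    have hcw := count_inc_wWord n
    have hacc1 : List.replicate i.val T3.inc ++ u ∈ D.accepts := by
      apply (hD _).2
      intro a
      cases a <;>
        simp [hu, List.count_append, List.count_replicate, hcw] <;> omega
    have heval : D.eval (List.replicate j.val T3.inc ++ u)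
        = D.eval (List.replicate i.val T3.inc ++ u) := by
      rw [eval_append, eval_append, heq]
    have hacc2 : List.replicate j.val T3.inc ++ u ∈ D.accepts := by
      rw [DFA.mem_accepts, heval, ← DFA.mem_accepts]
      exact hacc1
    have hcnt := (hD _).1 hacc2 T3.inc
    rw [hcw, List.count_append, hu] at hcnt
    simp [List.count_append, List.count_replicate] at hcnt
    omega
  have hinj : Function.Injective (fun i : Fin (2^n) => D.eval (List.replicate i.val T3.inc)) := by
    intro i j h
    by_contra hne
    exact key i j (fun hh => hne (Fin.ext hh)) h
  calc 2^n = Fintype.card (Fin (2^n)) := (Fintype.card_fin _).symm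
    _ ≤ Fintype.card Q := Fintype.card_le_of_injective _ hinj

end Ctr

theorem exists_nfas_singleton_double_count :
    ∃ c : ℕ, ∀ n : ℕ, 1 ≤ n →
      ∃ (Bs : Fin n → DFA T3 (Fin (c * n))) (w : List T3),
        {v : List T3 | ∀ i, v ∈ (Bs i).accepts} = {w} ∧
        w.count T3.inc = 2 ^ n ∧
        ∀ (Q : Type) (_ : Fintype Q) (D : DFA T3 Q),
          ((D.accepts : Set (List T3)) = {v | v.Sublist w} ∨
           (D.accepts : Set (List T3)) = {v | w.Sublist v} ∨
           (D.accepts : Set (List T3)) = {v | ∀ a, v.count a = w.count a}) →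
          2 ^ n ≤ Fintype.card Q := by
  classical
  refine ⟨49, ?_⟩
  intro n hn
  have hn0 : 0 < n := hn
  have hcard : Fintype.card (Ctr.St n) ≤ Fintype.card (Fin (49 * n)) := by
    simp only [Ctr.St, Fintype.card_option, Fintype.card_prod, Fintype.card_bool,
      Fintype.card_fin]
    omega
  obtain ⟨e⟩ := Function.Embedding.nonempty_of_card_le hcard
  set r : Fin (49 * n) → Ctr.St n := Function.invFun e with hrdef
  have hr : ∀ s, r (e s) = s := Function.leftInverse_invFun e.injective
  refine ⟨fun i => Ctr.embedDFA (Ctr.A n i.val) e r, Ctr.wWord n, ?_,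
    Ctr.count_inc_wWord n, ?_⟩
  · ext v
    simp only [Set.mem_setOf_eq, Set.mem_singleton_iff]
    constructor
    · intro hv
      apply Ctr.accepted_eq n hn0
      intro i hi
      have := hv ⟨i, hi⟩
      rwa [Ctr.embedDFA_accepts _ _ _ e.injective hr] at this
    · rintro rfl i
      rw [Ctr.embedDFA_accepts _ _ _ e.injective hr]
      exact Ctr.w_accepted n i.val i.isLt
  · intro Q instQ D hD
    rcases hD with h | h | h
    · have hmem : ∀ v, v ∈ D.accepts ↔ v.Sublist (Ctr.wWord n) := by
        intro v
        have h2 := Set.ext_iff.mp h v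
        exact h2
      exact le_of_eq_of_le (Ctr.count_inc_wWord n).symm
        (Ctr.lb_down (Ctr.wWord n) _ rfl D hmem)
    · have hmem : ∀ v, v ∈ D.accepts ↔ (Ctr.wWord n).Sublist v := by
        intro v
        have h2 := Set.ext_iff.mp h v
        exact h2
      exact Ctr.lb_up n D hmem
    · have hmem : ∀ v, v ∈ D.accepts ↔ ∀ a, v.count a = (Ctr.wWord n).count a := by
        intro v
        have h2 := Set.ext_iff.mp h v
        exact h2
      exact Ctr.lb_parikh n D hmem
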